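/- Let F be a finite index set, V a finite set of Boolean variables, and for each p ∈ F let C_p be a CNF formula over V having at least 1 and at most 2 clauses, and D_p a predicate on assignments σ : V → Bool such that σ satisfies C_p if and only if D_p σ holds. For an assignment σ let δ(σ) be the number of p ∈ F with D_p σ, and let SAT(σ) be the total number, summed over p ∈ F, of clauses of C_p made true by σ. Suppose ρ > 0 and α ≥ 1 are real numbers, the minimum over all assignments of δ is at least |F|/ρ, and σ* is an assignment with SAT(σ*) ≤ α · (minimum over all assignments of SAT). Then δ(σ*) ≤ α(1+ρ) · (minimum over all assignments of δ). -/

import Mathlib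

/-- A literal is a pair (variable, polarity); it is true under `σ` iff `σ`
maps the variable to the polarity.  A clause (list of literals) is made true
by `σ` iff some of its literals is true under `σ`. -/
def clauseTrue {V : Type} (σ : V → Bool) (cl : List (V × Bool)) : Bool :=
  cl.any fun l => σ l.1 == l.2

/-- Total number, over all indices `p`, of clauses of the CNF formula `C p`
made true by the assignment `σ`. -/
def satCount {F V : Type} [Fintype F] (C : F → List (List (V × Bool)))
    (σ : V → Bool) : ℕ :=
  ∑ p : F, (C p).countP (clauseTrue σ)

/-- Number of indices `p` such that the predicate `D p` holds of `σ`. -/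
noncomputable def dCount {F V : Type} [Fintype F] (D : F → (V → Bool) → Prop)
    (σ : V → Bool) : ℕ :=
  Nat.card {p : F // D p σ}

/-!
A satisfied formula has all of its (at least one) clauses true, and an unsatisfied formula with at
most two clauses has at most one true clause. Summing over `F`, `δ ≤ SAT ≤ |F| + δ` pointwise, and
the hypothesis `min δ ≥ |F| / ρ` turns the additive loss `|F|` into the factor `1 + ρ`.
-/

theorem le_mul_sInf_range_of_le_of_le_add {X : Type*} [Nonempty X] (s d : X → ℕ) (N : ℕ)
    (hds : ∀ x, d x ≤ s x) (hsd : ∀ x, s x ≤ N + d x) (ρ α : ℝ) (hρ : 0 < ρ) (hα : 0 ≤ α)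
    (hmin : (N : ℝ) / ρ ≤ ((sInf (Set.range d) : ℕ) : ℝ)) (x : X)
    (happrox : (s x : ℝ) ≤ α * ((sInf (Set.range s) : ℕ) : ℝ)) :
    (d x : ℝ) ≤ α * (1 + ρ) * ((sInf (Set.range d) : ℕ) : ℝ) := by
  obtain ⟨x₀, hx₀⟩ : sInf (Set.range d) ∈ Set.range d := Nat.sInf_mem (Set.range_nonempty d)
  have hs₀ : ((sInf (Set.range s) : ℕ) : ℝ) ≤ s x₀ := by
    exact_mod_cast Nat.sInf_le (Set.mem_range_self x₀)
  have hsd₀ : (s x₀ : ℝ) ≤ N + d x₀ := by exact_mod_cast hsd x₀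
  have hN : (N : ℝ) ≤ ρ * d x₀ := by rw [← hx₀] at hmin; exact (div_le_iff₀' hρ).mp hmin
  rw [← hx₀]
  calc (d x : ℝ) ≤ s x := by exact_mod_cast hds x
    _ ≤ α * ((sInf (Set.range s) : ℕ) : ℝ) := happrox
    _ ≤ α * (ρ * d x₀ + d x₀) := by gcongr; linarith
    _ = α * (1 + ρ) * d x₀ := by ring

section Counts

variable {F V : Type} [Fintype F] (C : F → List (List (V × Bool))) (D : F → (V → Bool) → Prop)

open Classical in
theorem dCount_eq_sum_ite (σ : V → Bool) : dCount D σ = ∑ p : F, if D p σ then 1 else 0 := by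
  rw [dCount, Nat.card_eq_fintype_card, Fintype.card_subtype, Finset.card_filter]

theorem dCount_le_satCount (hlen : ∀ p, 1 ≤ (C p).length)
    (hsat : ∀ p σ, D p σ → ∀ cl ∈ C p, clauseTrue σ cl = true) (σ : V → Bool) :
    dCount D σ ≤ satCount C σ := by
  classical
  rw [dCount_eq_sum_ite, satCount]
  refine Finset.sum_le_sum fun p _ => ?_
  split_ifs with h
  · rw [List.countP_eq_length.mpr (hsat p σ h)]
    exact hlen p
  · exact Nat.zero_le _

theorem satCount_le_card_add_dCount (hlen : ∀ p, (C p).length ≤ 2)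
    (hD : ∀ p σ, (∀ cl ∈ C p, clauseTrue σ cl = true) → D p σ) (σ : V → Bool) :
    satCount C σ ≤ Fintype.card F + dCount D σ := by
  classical
  rw [dCount_eq_sum_ite, satCount, ← Finset.card_univ, Finset.card_eq_sum_ones,
    ← Finset.sum_add_distrib]
  refine Finset.sum_le_sum fun p _ => ?_
  split_ifs with h
  · have := (C p).countP_le_length (p := clauseTrue σ)
    have := hlen p
    omega
  · have hlt : (C p).countP (clauseTrue σ) < (C p).length := by
      rw [List.countP_lt_length_iff]
      by_contra! hall
      exact h (hD p σ (by simpa using hall))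
    have := hlen p
    omega

end Counts

theorem approx_transfer_min2sat_general {F V : Type} [Fintype F]
    (C : F → List (List (V × Bool))) (D : F → (V → Bool) → Prop)
    (hlen : ∀ p, 1 ≤ (C p).length ∧ (C p).length ≤ 2)
    (hiff : ∀ p σ, (∀ cl ∈ C p, clauseTrue σ cl = true) ↔ D p σ)
    (ρ α : ℝ) (hρ : 0 < ρ) (hα : 1 ≤ α)
    (hmin : (Fintype.card F : ℝ) / ρ ≤ ((sInf (Set.range (dCount D)) : ℕ) : ℝ))
    (σstar : V → Bool)
    (happrox : (satCount C σstar : ℝ) ≤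
      α * ((sInf (Set.range (satCount C)) : ℕ) : ℝ)) :
    (dCount D σstar : ℝ) ≤
      α * (1 + ρ) * ((sInf (Set.range (dCount D)) : ℕ) : ℝ) :=
  le_mul_sInf_range_of_le_of_le_add (satCount C) (dCount D) (Fintype.card F)
    (dCount_le_satCount C D (fun p => (hlen p).1) fun p σ => (hiff p σ).mpr)
    (satCount_le_card_add_dCount C D (fun p => (hlen p).2) fun p σ => (hiff p σ).mp)
    ρ α hρ (zero_le_one.trans hα) hmin σstar happrox

theorem approx_transfer_min2sat {F V : Type} [Fintype F] [Fintype V]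
    (C : F → List (List (V × Bool))) (D : F → (V → Bool) → Prop)
    (hlen : ∀ p, 1 ≤ (C p).length ∧ (C p).length ≤ 2)
    (hiff : ∀ p σ, (∀ cl ∈ C p, clauseTrue σ cl = true) ↔ D p σ)
    (ρ α : ℝ) (hρ : 0 < ρ) (hα : 1 ≤ α)
    (hmin : (Fintype.card F : ℝ) / ρ ≤ ((sInf (Set.range (dCount D)) : ℕ) : ℝ))
    (σstar : V → Bool)
    (happrox : (satCount C σstar : ℝ) ≤
      α * ((sInf (Set.range (satCount C)) : ℕ) : ℝ)) :
    (dCount D σstar : ℝ) ≤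
      α * (1 + ρ) * ((sInf (Set.range (dCount D)) : ℕ) : ℝ) :=
  approx_transfer_min2sat_general C D hlen hiff ρ α hρ hα hmin σstar happrox
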